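/- arXiv:1411.1096 — 2 statements merged into one kernel-verified Lean document; each statement's English description precedes it below -/
import Mathlib

section
/- Assume E ⊆ A are finite symmetric integral relation algebras, A is a special extension of E, and E has a flexible trio a, b, c. Then for every n ∈ ω, the elements J(a,n), J(b,n), J(c,n) form a flexible trio of the finite subalgebra B_n of C_E(A) whose atoms are {1'} ∪ {x^(i) : x a diversity atom of A, i < n} ∪ {J(d,n) : d a diversity atom of E}. -/
universe u v

/-- Non-associative relation algebras: Boolean algebras with a binary
relative multiplication `comp`, unary converse `conv`, and identity `ide`. -/
class NA (α : Type u) extends BooleanAlgebra α where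
  comp : α → α → α
  conv : α → α
  ide : α
  comp_ide : ∀ x : α, comp x ide = x
  ide_comp : ∀ x : α, comp ide x = x
  conv_conv : ∀ x : α, conv (conv x) = x
  conv_sup : ∀ x y : α, conv (x ⊔ y) = conv x ⊔ conv y
  comp_sup : ∀ x y z : α, comp x (y ⊔ z) = comp x y ⊔ comp x z
  sup_comp : ∀ x y z : α, comp (x ⊔ y) z = comp x z ⊔ comp y z
  peirce1 : ∀ x y z : α, comp x y ⊓ z = ⊥ ↔ comp (conv x) z ⊓ y = ⊥
  peirce2 : ∀ x y z : α, comp x y ⊓ z = ⊥ ↔ comp z (conv y) ⊓ x = ⊥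

/-- Relation algebras: associative non-associative relation algebras. -/
class RA (α : Type u) extends NA α where
  comp_assoc : ∀ x y z : α, comp (comp x y) z = comp x (comp y z)

namespace NA

variable {α : Type u} [NA α]

/-- The diversity element 0'. -/
def div : α := (ide : α)ᶜ

/-- Converse is the identity. -/
def Symmetric (α : Type u) [NA α] : Prop := ∀ x : α, conv x = x

/-- The identity 1' is an atom. -/
def Integral (α : Type u) [NA α] : Prop := IsAtom (ide : α)

/-- A diversity atom: an atom below 0'. -/
def DivAtom (x : α) : Prop := IsAtom x ∧ x ≤ (div : α)

/-- A subalgebra of a (non-associative) relation algebra. -/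
structure Subalgebra (α : Type u) [NA α] where
  carrier : Set α
  bot_mem : ⊥ ∈ carrier
  top_mem : ⊤ ∈ carrier
  ide_mem : ide ∈ carrier
  compl_mem : ∀ x ∈ carrier, xᶜ ∈ carrier
  sup_mem : ∀ x ∈ carrier, ∀ y ∈ carrier, x ⊔ y ∈ carrier
  comp_mem : ∀ x ∈ carrier, ∀ y ∈ carrier, comp x y ∈ carrier
  conv_mem : ∀ x ∈ carrier, conv x ∈ carrier

/-- An atom of a subalgebra: a minimal nonzero element of the subalgebra. -/
def Subalgebra.AtomOf (E : Subalgebra α) (a : α) : Prop :=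
  a ∈ E.carrier ∧ a ≠ ⊥ ∧ ∀ b ∈ E.carrier, b ≤ a → b = ⊥ ∨ b = a

/-- A diversity atom of a subalgebra. -/
def Subalgebra.DivAtomOf (E : Subalgebra α) (a : α) : Prop :=
  E.AtomOf a ∧ a ≤ (div : α)

/-- `α` is (a copy of) the algebra E^{23}_q with atoms `e 0 = 1', e 1, …, e (q-1)`:
symmetric, integral, distinct diversity atoms multiply to 0', and
`e i ; e i = (e i)ᶜ` for diversity atoms. -/
def IsE23 (q : ℕ) (e : Fin q → α) : Prop :=
  Symmetric α ∧ Integral α ∧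
  Function.Injective e ∧ (∀ i : Fin q, (i : ℕ) = 0 → e i = ide) ∧
  (∀ i, IsAtom (e i)) ∧
  (∀ x : α, IsAtom x → ∃ i, x = e i) ∧
  (∀ i j : Fin q, (i : ℕ) ≠ 0 → (j : ℕ) ≠ 0 → i ≠ j →
    comp (e i) (e j) = (div : α)) ∧
  (∀ i : Fin q, (i : ℕ) ≠ 0 → comp (e i) (e i) = (e i)ᶜ)

/-- The subalgebra `Q` of `α` is a copy of E^{23}_q with atoms `e i`. -/
def IsE23Sub (Q : Subalgebra α) (q : ℕ) (e : Fin q → α) : Prop :=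
  Function.Injective e ∧ (∀ i : Fin q, (i : ℕ) = 0 → e i = ide) ∧
  (∀ i, Q.AtomOf (e i)) ∧
  (∀ x : α, Q.AtomOf x → ∃ i, x = e i) ∧
  (∀ i j : Fin q, (i : ℕ) ≠ 0 → (j : ℕ) ≠ 0 → i ≠ j →
    comp (e i) (e j) = (div : α)) ∧
  (∀ i : Fin q, (i : ℕ) ≠ 0 → comp (e i) (e i) = (e i)ᶜ)

/-- `cov` is a cover map for the subalgebra `E`: it sends each atom of the
ambient algebra to the atom of `E` containing it. -/
def CoverMap (E : Subalgebra α) (cov : α → α) : Prop :=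
  ∀ x : α, IsAtom x → E.AtomOf (cov x) ∧ x ≤ cov x

/-- The ambient atomic algebra is obtained from the subalgebra `B` by
splitting, with cover map `cov`. -/
def Splitting (B : Subalgebra α) (cov : α → α) : Prop :=
  CoverMap B cov ∧
  (∀ x y : α, DivAtom x → DivAtom y →
    (x = conv y → comp x y = comp (cov x) (cov y)) ∧
    (x ≠ conv y → comp x y = comp (cov x) (cov y) ⊓ (div : α)))

/-- The ambient algebra is a special extension of its subalgebra `E`. -/
def SpecialExt (E : Subalgebra α) : Prop :=
  (∀ a b c : α, E.DivAtomOf a → E.DivAtomOf b → E.DivAtomOf c →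
    ¬(a = b ∧ b = c) → c ≤ comp a b →
    ∀ x y : α, IsAtom x → IsAtom y → x ≤ a → y ≤ b → c ≤ comp x y) ∧
  (∀ a : α, E.DivAtomOf a → a ≤ comp a a →
    ∀ x y : α, IsAtom x → IsAtom y → x ≤ a → y ≤ a → comp x y ⊓ a ≠ ⊥)

/-- A flexible atom. -/
def Flexible (a : α) : Prop :=
  DivAtom a ∧ comp a a = ⊤ ∧
  ∀ x : α, DivAtom x → x ≠ a → comp x a = (div : α)

/-- A flexible atom of a subalgebra. -/
def FlexibleOf (E : Subalgebra α) (a : α) : Prop :=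
  E.DivAtomOf a ∧ comp a a = ⊤ ∧
  ∀ x : α, E.DivAtomOf x → x ≠ a → comp x a = (div : α)

/-- A flexible trio of diversity atoms. -/
def FlexTrio (a b c : α) : Prop :=
  DivAtom a ∧ DivAtom b ∧ DivAtom c ∧ a ≠ b ∧ a ≠ c ∧ b ≠ c ∧
  comp a a = ⊤ ∧ comp b b = ⊤ ∧ comp c c = ⊤ ∧
  comp a b = (div : α) ∧ comp a c = (div : α) ∧ comp b c = (div : α) ∧
  ∀ x : α, IsAtom x → x ∉ ({(ide : α), a, b, c} : Set α) →
    (comp x a = (div : α) ∧ comp x b = (div : α)) ∨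
    (comp x a = (div : α) ∧ comp x c = (div : α)) ∨
    (comp x b = (div : α) ∧ comp x c = (div : α))

/-- A flexible trio of diversity atoms of a subalgebra. -/
def FlexTrioOf (E : Subalgebra α) (a b c : α) : Prop :=
  E.DivAtomOf a ∧ E.DivAtomOf b ∧ E.DivAtomOf c ∧ a ≠ b ∧ a ≠ c ∧ b ≠ c ∧
  comp a a = ⊤ ∧ comp b b = ⊤ ∧ comp c c = ⊤ ∧
  comp a b = (div : α) ∧ comp a c = (div : α) ∧ comp b c = (div : α) ∧
  ∀ d : α, E.DivAtomOf d → d ∉ ({a, b, c} : Set α) →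
    (comp d a = (div : α) ∧ comp d b = (div : α)) ∨
    (comp d a = (div : α) ∧ comp d c = (div : α)) ∨
    (comp d b = (div : α) ∧ comp d c = (div : α))

/-- Basic k-by-k matrices of atoms. -/
def BasicMatrix (k : ℕ) (μ : Fin k → Fin k → α) : Prop :=
  (∀ i j, IsAtom (μ i j)) ∧ (∀ i, μ i i ≤ (ide : α)) ∧
  (∀ i j, conv (μ i j) = μ j i) ∧
  (∀ i j l, μ i j ≤ comp (μ i l) (μ l j))

/-- The identity condition for a basic matrix. -/
def IdCond (k : ℕ) (μ : Fin k → Fin k → α) : Prop :=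
  ∀ i j, μ i j = (ide : α) ↔ i = j

/-- The 1-point extension property. -/
def OnePointExt (α : Type u) [NA α] : Prop :=
  ∀ (k : ℕ) (μ : Fin k → Fin k → α), BasicMatrix k μ → IdCond k μ →
  ∀ x y : α, DivAtom x → DivAtom y → ∀ i j : Fin k, i ≠ j → μ i j ≤ comp x y →
  ∃ μ' : Fin (k + 1) → Fin (k + 1) → α, BasicMatrix (k + 1) μ' ∧ IdCond (k + 1) μ' ∧
    (∀ l m : Fin k, μ' l.castSucc m.castSucc = μ l m) ∧
    μ' i.castSucc (Fin.last k) = x ∧ μ' (Fin.last k) j.castSucc = y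

/-- A representation of `α` over a base set `X`. -/
structure Representation (α : Type u) [NA α] (X : Type v) where
  toFun : α → Set (X × X)
  inj : Function.Injective toFun
  map_sup : ∀ a b : α, toFun (a ⊔ b) = toFun a ∪ toFun b
  map_compl : ∀ a : α, toFun aᶜ = toFun ⊤ \ toFun a
  map_comp : ∀ a b : α,
    toFun (comp a b) = {p | ∃ z, (p.1, z) ∈ toFun a ∧ (z, p.2) ∈ toFun b}
  map_conv : ∀ a : α, toFun (conv a) = {p | (p.2, p.1) ∈ toFun a}
  map_ide : toFun ide = {p | p ∈ toFun ⊤ ∧ p.1 = p.2}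

/-- A complete representation: preserves all existing joins. -/
def Representation.IsComplete {α : Type u} [NA α] {X : Type v}
    (r : Representation α X) : Prop :=
  ∀ (S : Set α) (s : α), IsLUB S s → r.toFun s = ⋃ a ∈ S, r.toFun a

/-- Representability. -/
def Representable (α : Type u) [NA α] : Prop :=
  ∃ X : Type u, Nonempty (Representation α X)

/-- A representation of a subalgebra `E` over a base set `X`. -/
structure SubRepresentation (E : Subalgebra α) (X : Type v) where
  toFun : α → Set (X × X)
  inj : ∀ x ∈ E.carrier, ∀ y ∈ E.carrier, toFun x = toFun y → x = y
  map_sup : ∀ x ∈ E.carrier, ∀ y ∈ E.carrier, toFun (x ⊔ y) = toFun x ∪ toFun y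
  map_compl : ∀ x ∈ E.carrier, toFun xᶜ = toFun ⊤ \ toFun x
  map_comp : ∀ x ∈ E.carrier, ∀ y ∈ E.carrier,
    toFun (comp x y) = {p | ∃ z, (p.1, z) ∈ toFun x ∧ (z, p.2) ∈ toFun y}
  map_conv : ∀ x ∈ E.carrier, toFun (conv x) = {p | (p.2, p.1) ∈ toFun x}
  map_ide : toFun ide = {p | p ∈ toFun ⊤ ∧ p.1 = p.2}

/-- A homomorphism of (non-associative) relation algebras. -/
structure Hom (α : Type u) (β : Type v) [NA α] [NA β] where
  toFun : α → β
  map_sup : ∀ a b : α, toFun (a ⊔ b) = toFun a ⊔ toFun b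
  map_compl : ∀ a : α, toFun aᶜ = (toFun a)ᶜ
  map_comp : ∀ a b : α, toFun (comp a b) = comp (toFun a) (toFun b)
  map_conv : ∀ a : α, toFun (conv a) = conv (toFun a)
  map_ide : toFun ide = ide

/-- The thinning relation T(i,j,k) ⟺ (i ≤ j = k) ∨ (j ≤ k = i) ∨ (k ≤ i = j). -/
def T3 (i j k : ℕ) : Prop :=
  (i ≤ j ∧ j = k) ∨ (j ≤ k ∧ k = i) ∨ (k ≤ i ∧ i = j)

/-- The type of diversity atoms of `α`. -/
abbrev DAt (α : Type u) [NA α] : Type u := {x : α // DivAtom x}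

/-- Atoms of the algebra C_E(A): the identity atom `none` together with
copies `some (x, i)` of each diversity atom `x` of `A`, for `i ∈ ω`. -/
abbrev CAtom (α : Type u) [NA α] : Type u := Option (DAt α × ℕ)

/-- The cycle relation of the atom structure of C_E(A), relative to the cover
map `cov` of the subalgebra E. -/
def Cyc (cov : α → α) : CAtom α → CAtom α → CAtom α → Prop
  | none, none, none => True
  | none, some p, some q => p = q
  | some p, none, some q => p = q
  | some p, some q, none => p = q
  | some p, some q, some r =>
      r.1.1 ≤ comp p.1.1 q.1.1 ∧
      (cov p.1.1 = cov q.1.1 ∧ cov q.1.1 = cov r.1.1 → T3 p.2 q.2 r.2)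
  | _, _, _ => False

/-- Relative multiplication in the complex algebra C_E(A). -/
def Ccomp (cov : α → α) (X Y : Set (CAtom α)) : Set (CAtom α) :=
  {w | ∃ u ∈ X, ∃ v ∈ Y, Cyc cov u v w}

/-- The element J(a, n) of C_E(A). -/
def Jel (a : α) (n : ℕ) : Set (CAtom α) :=
  {w | (∃ p : DAt α × ℕ, w = some p ∧ p.1.1 ≤ a ∧ n ≤ p.2) ∨
       (w = none ∧ (ide : α) ≤ a)}

/-- The atom set B_n of the finite subalgebra of C_E(A). -/
def Bset (E : Subalgebra α) (n : ℕ) : Set (Set (CAtom α)) :=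
  {s | s = ({none} : Set (CAtom α))} ∪
  {s | ∃ (x : DAt α) (i : ℕ), i < n ∧ s = {some (x, i)}} ∪
  {s | ∃ a : α, E.DivAtomOf a ∧ s = Jel a n}

/-- Subalgebra of C_E(A) generated by a set `G` of elements. -/
inductive GenFrom (cov : α → α) (G : Set (Set (CAtom α))) : Set (CAtom α) → Prop
  | base {s : Set (CAtom α)} : s ∈ G → GenFrom cov G s
  | bot : GenFrom cov G ∅
  | idel : GenFrom cov G ({none} : Set (CAtom α))
  | compl {s : Set (CAtom α)} : GenFrom cov G s → GenFrom cov G sᶜ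
  | sup {s t : Set (CAtom α)} : GenFrom cov G s → GenFrom cov G t →
      GenFrom cov G (s ∪ t)
  | cmp {s t : Set (CAtom α)} : GenFrom cov G s → GenFrom cov G t →
      GenFrom cov G (Ccomp cov s t)

/-- Membership in the subalgebra B of C_E(A) generated by the atoms. -/
def Gen (cov : α → α) : Set (CAtom α) → Prop :=
  GenFrom cov {s | ∃ w : CAtom α, s = {w}}

end NA

/-! If `d ; u = 0'` in `E` with `d ≠ u`, condition (i) of a special extension puts every
diversity atom `z` of `A` below `x ; y` for all atoms `x ≤ d`, `y ≤ u` of `A`; the copies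
`x^(i)`, `y^(j)`, `z^(k)` then never share a cover, so the thinning condition `T` is void,
and `1'` is missed because atoms below `d` and `u` are disjoint: `J(d,n) ; J(u,n) = 0'`.
For `a ; a = 1`, conditions (i) (when `cov z ≠ a`) and (ii) (when `cov z = a`) give atoms
`x, y ≤ a` with `z ≤ x ; y`, and the copies `x^(m), y^(m), z^(k)` with `m = max n k`
satisfy `T`; so `J(a,n) ; J(a,n) = 1`. Every other atom of `B_n` consists of copies of
atoms below one diversity atom `d` of `E`, and the flexible-trio condition for `d` in `E`
transfers to `B_n`. -/

namespace NA

variable {α : Type*} [NA α]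

theorem comp_comm (hsym : Symmetric α) (x y : α) : comp x y = comp y x := by
  have key : ∀ x y w : α, comp x y ⊓ w = ⊥ → comp y x ⊓ w = ⊥ := by
    intro x y w h
    rwa [peirce2, hsym, peirce1, hsym, peirce2, hsym] at h
  have hle : ∀ x y : α, comp x y ≤ comp y x := fun x y =>
    disjoint_compl_right_iff.mp (disjoint_iff.mpr (key y x _ inf_compl_eq_bot))
  exact le_antisymm (hle x y) (hle y x)

theorem ide_not_le_of_le_div (hint : Integral α) {a : α} (ha : a ≤ div) : ¬ ide ≤ a :=
  fun h => hint.1 (le_bot_iff.mp (le_inf le_rfl (h.trans ha) |>.trans_eq inf_compl_eq_bot))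

namespace Subalgebra

variable {E : Subalgebra α}

theorem inf_mem {x y : α} (hx : x ∈ E.carrier) (hy : y ∈ E.carrier) :
    x ⊓ y ∈ E.carrier := by
  simpa using E.compl_mem _ (E.sup_mem _ (E.compl_mem _ hx) _ (E.compl_mem _ hy))

theorem AtomOf.disjoint {d u : α} (hd : E.AtomOf d) (hu : E.AtomOf u) (hne : d ≠ u) :
    Disjoint d u := by
  rw [disjoint_iff]
  refine (hd.2.2 _ (inf_mem hd.1 hu.1) inf_le_left).resolve_right fun h => ?_
  have hdu : d ≤ u := h ▸ inf_le_right
  exact (hu.2.2 _ hd.1 hdu).elim hd.2.1 hne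

theorem DivAtomOf.exists_le [IsAtomic α] {d : α} (hd : E.DivAtomOf d) :
    ∃ x : DAt α, x.1 ≤ d := by
  obtain ⟨x, hx, hxd⟩ := (eq_bot_or_exists_atom_le d).resolve_left hd.1.2.1
  exact ⟨⟨x, hx, hxd.trans hd.2⟩, hxd⟩

end Subalgebra

namespace CoverMap

variable {E : Subalgebra α} {cov : α → α}

theorem eq_of_le (hcov : CoverMap E cov) {x d : α} (hx : IsAtom x) (hd : E.AtomOf d)
    (hxd : x ≤ d) : cov x = d := by
  by_contra hne
  exact hx.1 (le_bot_iff.mp (((hcov x hx).1.disjoint hd hne) (hcov x hx).2 hxd))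

theorem divAtomOf (hint : Integral α) (hcov : CoverMap E cov) {x : α} (hx : DivAtom x) :
    E.DivAtomOf (cov x) := by
  obtain ⟨hatom, hxc⟩ := hcov x hx.1
  refine ⟨hatom, le_compl_iff_disjoint_right.mpr
    (hatom.disjoint ⟨E.ide_mem, hint.1, ?_⟩ ?_)⟩
  · exact fun y _ hy => hint.le_iff.mp hy
  · intro h
    exact hx.1.1 (le_bot_iff.mp (le_compl_iff_disjoint_right.mp hx.2 le_rfl (h ▸ hxc)))

end CoverMap

namespace SpecialExt

variable {E : Subalgebra α} {cov : α → α}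

theorem le_comp_of_comp_eq_div (hint : Integral α) (hcov : CoverMap E cov)
    (hspec : SpecialExt E) {d u : α} (hd : E.DivAtomOf d) (hu : E.DivAtomOf u) (hne : d ≠ u)
    (hdu : comp d u = div) {x y z : α} (hx : IsAtom x) (hy : IsAtom y) (hz : DivAtom z)
    (hxd : x ≤ d) (hyu : y ≤ u) : z ≤ comp x y :=
  (hcov z hz.1).2.trans <| hspec.1 d u _ hd hu (hcov.divAtomOf hint hz) (fun h => hne h.1)
    (hdu ▸ (hcov.divAtomOf hint hz).2) x y hx hy hxd hyu

theorem exists_le_comp_of_comp_self_eq_top [IsAtomic α] (hsym : Symmetric α)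
    (hint : Integral α) (hcov : CoverMap E cov) (hspec : SpecialExt E) {a : α}
    (ha : E.DivAtomOf a) (haa : comp a a = ⊤) {z : α} (hz : DivAtom z) :
    ∃ x y : α, IsAtom x ∧ IsAtom y ∧ x ≤ a ∧ y ≤ a ∧ z ≤ comp x y := by
  by_cases hza : cov z = a
  · have hzle : z ≤ a := hza ▸ (hcov z hz.1).2
    obtain ⟨y, hy, hyle⟩ := (eq_bot_or_exists_atom_le _).resolve_left
      (hspec.2 a ha (haa ▸ le_top) z z hz.1 hz.1 hzle hzle)
    refine ⟨z, y, hz.1, hy, hzle, hyle.trans inf_le_right, ?_⟩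
    -- Peirce: `y ≤ z ; z` means `z ; y` meets `z`, and `z` is an atom.
    have hmeet : comp z y ⊓ z ≠ ⊥ := by
      rw [Ne, peirce1, hsym, inf_eq_right.mpr (hyle.trans inf_le_left)]
      exact hy.1
    exact inf_eq_right.mp ((hz.1.le_iff.mp inf_le_right).resolve_left hmeet)
  · obtain ⟨x, hx, hxa⟩ := (eq_bot_or_exists_atom_le a).resolve_left ha.1.2.1
    exact ⟨x, x, hx, hx, hxa, hxa, (hcov z hz.1).2.trans <| hspec.1 a a _ ha ha
      (hcov.divAtomOf hint hz) (fun h => hza h.2.symm) (haa ▸ le_top) x x hx hx hxa hxa⟩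

end SpecialExt

def TwoOfThree (P Q R : Prop) : Prop :=
  (P ∧ Q) ∨ (P ∧ R) ∨ (Q ∧ R)

theorem TwoOfThree.imp {P Q R P' Q' R' : Prop} (hP : P → P') (hQ : Q → Q') (hR : R → R')
    (h : TwoOfThree P Q R) : TwoOfThree P' Q' R' := by
  rcases h with h | h | h
  exacts [Or.inl (h.imp hP hQ), Or.inr (Or.inl (h.imp hP hR)), Or.inr (Or.inr (h.imp hQ hR))]

theorem FlexTrioOf.twoOfThree {E : Subalgebra α} (hsym : Symmetric α) {a b c d : α}
    (htrio : FlexTrioOf E a b c) (hd : E.DivAtomOf d) :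
    TwoOfThree (d ≠ a ∧ comp d a = div) (d ≠ b ∧ comp d b = div)
      (d ≠ c ∧ comp d c = div) := by
  obtain ⟨-, -, -, hab, hac, hbc, -, -, -, hab', hac', hbc', hrest⟩ := htrio
  by_cases hda : d = a
  · subst hda; exact Or.inr (Or.inr ⟨⟨hab, hab'⟩, hac, hac'⟩)
  by_cases hdb : d = b
  · subst hdb; exact Or.inr (Or.inl ⟨⟨hab.symm, comp_comm hsym d a ▸ hab'⟩, hbc, hbc'⟩)
  by_cases hdc : d = c
  · subst hdc
    exact Or.inl
      ⟨⟨hac.symm, comp_comm hsym d a ▸ hac'⟩, hbc.symm, comp_comm hsym d b ▸ hbc'⟩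
  refine TwoOfThree.imp (And.intro hda) (And.intro hdb) (And.intro hdc) (hrest d hd ?_)
  simp [hda, hdb, hdc]

/-- `X` is a nonempty set of copies `x^(i)` of atoms `x ≤ d` of `A`. -/
def LiesOver (d : α) (X : Set (CAtom α)) : Prop :=
  X.Nonempty ∧ ∀ w ∈ X, ∃ p : DAt α × ℕ, w = some p ∧ p.1.1 ≤ d

section Complex

variable {E : Subalgebra α} {cov : α → α}

theorem mem_Jel_of_le_div (hint : Integral α) {d : α} (hd : d ≤ div) {n : ℕ} {w : CAtom α} :
    w ∈ Jel d n ↔ ∃ p : DAt α × ℕ, w = some p ∧ p.1.1 ≤ d ∧ n ≤ p.2 :=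
  or_iff_left fun h => ide_not_le_of_le_div hint hd h.2

theorem liesOver_Jel [IsAtomic α] (hint : Integral α) {d : α} (hd : E.DivAtomOf d) (n : ℕ) :
    LiesOver d (Jel d n) := by
  obtain ⟨x, hx⟩ := hd.exists_le
  refine ⟨⟨some (x, n), Or.inl ⟨_, rfl, hx, le_rfl⟩⟩, fun w hw => ?_⟩
  obtain ⟨p, rfl, hp, -⟩ := (mem_Jel_of_le_div hint hd.2).mp hw
  exact ⟨p, rfl, hp⟩

theorem liesOver_cov (hcov : CoverMap E cov) (x : DAt α) (i : ℕ) :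
    LiesOver (cov x.1) {some (x, i)} :=
  ⟨Set.singleton_nonempty _, fun _ hw => ⟨(x, i), hw, (hcov x.1 x.2.1).2⟩⟩

theorem exists_liesOver_of_mem_Bset [IsAtomic α] (hint : Integral α) (hcov : CoverMap E cov)
    {n : ℕ} {s : Set (CAtom α)} (hs : s ∈ Bset E n) (hs1 : s ≠ {none}) :
    ∃ d, E.DivAtomOf d ∧ LiesOver d s := by
  rcases hs with (hs | ⟨x, i, -, rfl⟩) | ⟨d, hd, rfl⟩
  · exact absurd hs hs1
  · exact ⟨_, hcov.divAtomOf hint x.2, liesOver_cov hcov x i⟩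
  · exact ⟨d, hd, liesOver_Jel hint hd n⟩

theorem LiesOver.ccomp_Jel [IsAtomic α] (hint : Integral α) (hcov : CoverMap E cov)
    (hspec : SpecialExt E) {d u : α} (hd : E.DivAtomOf d) (hu : E.DivAtomOf u) (hne : d ≠ u)
    (hdu : comp d u = div) {X : Set (CAtom α)} (hX : LiesOver d X) (n : ℕ) :
    Ccomp cov X (Jel u n) = {none}ᶜ := by
  ext w
  simp only [Set.mem_compl_iff, Set.mem_singleton_iff]
  constructor
  · rintro ⟨_, hv, _, hv', hcyc⟩ rfl
    obtain ⟨p, rfl, hpd⟩ := hX.2 _ hv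
    obtain ⟨q, rfl, hqu, -⟩ := (mem_Jel_of_le_div hint hu.2).mp hv'
    obtain rfl : p = q := hcyc
    exact p.1.2.1.1 (le_bot_iff.mp (hd.1.disjoint hu.1 hne hpd hqu))
  · intro hw
    obtain ⟨z, rfl⟩ := Option.ne_none_iff_exists'.mp hw
    obtain ⟨_, hv⟩ := hX.1
    obtain ⟨p, rfl, hpd⟩ := hX.2 _ hv
    obtain ⟨y, hyu⟩ := hu.exists_le
    refine ⟨some p, hv, some (y, n), Or.inl ⟨_, rfl, hyu, le_rfl⟩, ?_, fun h => ?_⟩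
    · exact hspec.le_comp_of_comp_eq_div hint hcov hd hu hne hdu p.1.2.1 y.2.1 z.1.2 hpd hyu
    · exact absurd ((hcov.eq_of_le p.1.2.1 hd.1 hpd).symm.trans
        (h.1.trans (hcov.eq_of_le y.2.1 hu.1 hyu))) hne

theorem ccomp_Jel_self [IsAtomic α] (hsym : Symmetric α) (hint : Integral α)
    (hcov : CoverMap E cov) (hspec : SpecialExt E) {a : α} (ha : E.DivAtomOf a)
    (haa : comp a a = ⊤) (n : ℕ) : Ccomp cov (Jel a n) (Jel a n) = Set.univ := by
  refine Set.eq_univ_of_forall fun w => ?_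
  match w with
  | none =>
    obtain ⟨x, hxa⟩ := ha.exists_le
    have hx : some (x, n) ∈ Jel a n := Or.inl ⟨_, rfl, hxa, le_rfl⟩
    exact ⟨_, hx, _, hx, rfl⟩
  | some z =>
    obtain ⟨x, y, hx, hy, hxa, hya, hz⟩ :=
      hspec.exists_le_comp_of_comp_self_eq_top hsym hint hcov ha haa z.1.2
    refine ⟨some (⟨x, hx, hxa.trans ha.2⟩, max n z.2),
      Or.inl ⟨_, rfl, hxa, le_max_left _ _⟩,
      some (⟨y, hy, hya.trans ha.2⟩, max n z.2), Or.inl ⟨_, rfl, hya, le_max_left _ _⟩,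
      hz, fun _ => Or.inr (Or.inr ⟨le_max_right _ _, rfl⟩)⟩

theorem Jel_ne [IsAtomic α] (hint : Integral α) {d u : α} (hd : E.DivAtomOf d)
    (hu : E.DivAtomOf u) (hne : d ≠ u) (n : ℕ) : Jel d n ≠ Jel u n := by
  obtain ⟨x, hxd⟩ := hd.exists_le
  intro h
  have hmem : some (x, n) ∈ Jel u n := h ▸ Or.inl ⟨_, rfl, hxd, le_rfl⟩
  obtain ⟨_, hp, hxu, -⟩ := (mem_Jel_of_le_div hint hu.2).mp hmem
  cases hp
  exact x.2.1.1 (le_bot_iff.mp (hd.1.disjoint hu.1 hne hxd hxu))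

end Complex

end NA

/-- If E ⊆ A are finite symmetric integral relation algebras, A
is a special extension of E, and a, b, c is a flexible trio of E, then for
every n the elements J(a,n), J(b,n), J(c,n) form a flexible trio of the finite
subalgebra B_n of C_E(A) whose atom set is Bset E n. -/
theorem stmt15 {α : Type} [RA α] [Fintype α]
    (hsym : NA.Symmetric α) (hint : NA.Integral α)
    (E : NA.Subalgebra α) (cov : α → α) (hcov : NA.CoverMap E cov)
    (hspec : NA.SpecialExt E)
    (a b c : α) (htrio : NA.FlexTrioOf E a b c) (n : ℕ) :
    NA.Jel a n ∈ NA.Bset E n ∧ NA.Jel b n ∈ NA.Bset E n ∧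
    NA.Jel c n ∈ NA.Bset E n ∧
    NA.Jel a n ≠ NA.Jel b n ∧ NA.Jel a n ≠ NA.Jel c n ∧
    NA.Jel b n ≠ NA.Jel c n ∧
    NA.Ccomp cov (NA.Jel a n) (NA.Jel a n) = Set.univ ∧
    NA.Ccomp cov (NA.Jel b n) (NA.Jel b n) = Set.univ ∧
    NA.Ccomp cov (NA.Jel c n) (NA.Jel c n) = Set.univ ∧
    NA.Ccomp cov (NA.Jel a n) (NA.Jel b n) = ({none} : Set (NA.CAtom α))ᶜ ∧
    NA.Ccomp cov (NA.Jel a n) (NA.Jel c n) = ({none} : Set (NA.CAtom α))ᶜ ∧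
    NA.Ccomp cov (NA.Jel b n) (NA.Jel c n) = ({none} : Set (NA.CAtom α))ᶜ ∧
    ∀ s ∈ NA.Bset E n, s ≠ ({none} : Set (NA.CAtom α)) →
      s ∉ ({NA.Jel a n, NA.Jel b n, NA.Jel c n} : Set (Set (NA.CAtom α))) →
      ((NA.Ccomp cov s (NA.Jel a n) = ({none} : Set (NA.CAtom α))ᶜ ∧
        NA.Ccomp cov s (NA.Jel b n) = ({none} : Set (NA.CAtom α))ᶜ) ∨
       (NA.Ccomp cov s (NA.Jel a n) = ({none} : Set (NA.CAtom α))ᶜ ∧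
        NA.Ccomp cov s (NA.Jel c n) = ({none} : Set (NA.CAtom α))ᶜ) ∨
       (NA.Ccomp cov s (NA.Jel b n) = ({none} : Set (NA.CAtom α))ᶜ ∧
        NA.Ccomp cov s (NA.Jel c n) = ({none} : Set (NA.CAtom α))ᶜ)) := by
  have ⟨hda, hdb, hdc, hab, hac, hbc, haa, hbb, hcc, hab', hac', hbc', _⟩ := htrio
  have hJJ := fun {d u : α} (hd : E.DivAtomOf d) (hu : E.DivAtomOf u) =>
    (NA.liesOver_Jel hint hd n).ccomp_Jel hint hcov hspec hd hu
  refine ⟨Or.inr ⟨a, hda, rfl⟩, Or.inr ⟨b, hdb, rfl⟩, Or.inr ⟨c, hdc, rfl⟩,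
    NA.Jel_ne hint hda hdb hab n, NA.Jel_ne hint hda hdc hac n, NA.Jel_ne hint hdb hdc hbc n,
    NA.ccomp_Jel_self hsym hint hcov hspec hda haa n,
    NA.ccomp_Jel_self hsym hint hcov hspec hdb hbb n,
    NA.ccomp_Jel_self hsym hint hcov hspec hdc hcc n,
    hJJ hda hdb hab hab' n, hJJ hda hdc hac hac' n, hJJ hdb hdc hbc hbc' n, ?_⟩
  intro s hs hs1 _
  obtain ⟨d, hd, hsd⟩ := NA.exists_liesOver_of_mem_Bset hint hcov hs hs1
  exact (htrio.twoOfThree hsym hd).imp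
    (fun h => hsd.ccomp_Jel hint hcov hspec hd hda h.1 h.2 n)
    (fun h => hsd.ccomp_Jel hint hcov hspec hd hdb h.1 h.2 n)
    (fun h => hsd.ccomp_Jel hint hcov hspec hd hdc h.1 h.2 n)
end

section
/- Assume 4 ≤ r, A = E^{23}_{r+3} with atoms 1' = e_0, e_1, ..., e_{r+2}, E is the subalgebra of A with r atoms a_0 = 1', a_1 = e_1 + e_2, a_2 = e_3 + e_4, a_3 = e_5 + e_6, a_4 = e_7, ..., a_{r-1} = e_{r+2}. Then A is a special extension of E, and a_1, a_2, a_3 is a flexible trio of E. -/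
universe u v

/-! In `E^{23}_q` two distinct diversity atoms compose to `0'` and a diversity atom composes with
itself to its complement. So for atoms `x ≤ a`, `y ≤ b` below diversity atoms of any subalgebra,
`x ; y = 0'` unless `x = y`; then `a = b`, and `x ; x = xᶜ` still contains every other atom of the
subalgebra, which makes the whole algebra a special extension of any of its subalgebras.
Each `a_k = e_{2k-1} + e_{2k}` (`k = 1, 2, 3`) squares to `1`, since the squares of its two atoms
are the complements of two disjoint atoms. Two disjoint nonzero elements below `0'` compose to
exactly `0'`: one pair of atoms below them already gives `0'`, and Peirce's law gives `≤ 0'`. -/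

namespace NA

section

variable {α : Type u} [NA α]

theorem comp_mono {x x' y y' : α} (hx : x ≤ x') (hy : y ≤ y') : comp x y ≤ comp x' y' := by
  calc comp x y ≤ comp x y ⊔ comp x y' := le_sup_left
    _ = comp x y' := by rw [← comp_sup, sup_eq_right.mpr hy]
    _ ≤ comp x y' ⊔ comp x' y' := le_sup_left
    _ = comp x' y' := by rw [← sup_comp, sup_eq_right.mpr hx]

theorem ide_not_le_div (h : Integral α) : ¬ (ide : α) ≤ div :=
  fun hle => h.1 (disjoint_self.mp (le_compl_iff_disjoint_right.mp hle))

theorem comp_le_div_of_disjoint (hsym : Symmetric α) {s t : α} (hst : Disjoint s t) :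
    comp s t ≤ div := by
  refine le_compl_iff_disjoint_right.mpr (disjoint_iff.mpr ?_)
  rw [peirce1, hsym, comp_ide]
  exact disjoint_iff.mp hst

theorem Subalgebra.inf_mem_s18 (E : Subalgebra α) {a b : α} (ha : a ∈ E.carrier)
    (hb : b ∈ E.carrier) : a ⊓ b ∈ E.carrier := by
  rw [← compl_compl (a ⊓ b), compl_inf]
  exact E.compl_mem _ (E.sup_mem _ (E.compl_mem _ ha) _ (E.compl_mem _ hb))

theorem Subalgebra.AtomOf.disjoint_of_ne {E : Subalgebra α} {a b : α} (ha : E.AtomOf a)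
    (hb : E.AtomOf b) (hab : a ≠ b) : Disjoint a b := by
  refine disjoint_iff.mpr ((ha.2.2 _ (E.inf_mem_s18 ha.1 hb.1) inf_le_left).resolve_right ?_)
  intro h
  have hle : a ≤ b := h ▸ inf_le_right
  exact hab ((hb.2.2 a ha.1 hle).resolve_left ha.2.1)

theorem Subalgebra.AtomOf.eq_of_le_of_le {E : Subalgebra α} {a b x : α} (ha : E.AtomOf a)
    (hb : E.AtomOf b) (hx : x ≠ ⊥) (hxa : x ≤ a) (hxb : x ≤ b) : a = b := by
  by_contra hab
  exact hx (disjoint_self.mp ((ha.disjoint_of_ne hb hab).mono hxa hxb))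

namespace IsE23

variable {q : ℕ} {e : Fin q → α}

theorem divAtom_apply (h : IsE23 q e) {i : Fin q} (hi : (i : ℕ) ≠ 0) : DivAtom (e i) := by
  obtain ⟨-, -, hinj, hide, hatom, -⟩ := h
  let i₀ : Fin q := ⟨0, by omega⟩
  have hne : e i ≠ e i₀ := hinj.ne fun hii₀ => hi (congrArg Fin.val hii₀)
  refine ⟨hatom i, le_compl_iff_disjoint_right.mpr ?_⟩
  rw [← hide i₀ rfl]
  exact (hatom i).disjoint_of_ne (hatom i₀) hne

theorem exists_eq_of_divAtom (h : IsE23 q e) {x : α} (hx : DivAtom x) :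
    ∃ i : Fin q, (i : ℕ) ≠ 0 ∧ x = e i := by
  obtain ⟨-, hint, -, hide, -, hatoms, -⟩ := h
  obtain ⟨i, rfl⟩ := hatoms x hx.1
  exact ⟨i, fun hi => ide_not_le_div hint (hide i hi ▸ hx.2), rfl⟩

theorem comp_of_ne (h : IsE23 q e) {x y : α} (hx : DivAtom x) (hy : DivAtom y)
    (hxy : x ≠ y) : comp x y = div := by
  obtain ⟨i, hi, rfl⟩ := h.exists_eq_of_divAtom hx
  obtain ⟨j, hj, rfl⟩ := h.exists_eq_of_divAtom hy
  obtain ⟨-, -, -, -, -, -, hcomp, -⟩ := h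
  exact hcomp i j hi hj fun hij => hxy (hij ▸ rfl)

theorem comp_self (h : IsE23 q e) {x : α} (hx : DivAtom x) : comp x x = xᶜ := by
  obtain ⟨i, hi, rfl⟩ := h.exists_eq_of_divAtom hx
  obtain ⟨-, -, -, -, -, -, -, hsq⟩ := h
  exact hsq i hi

theorem comp_sup_self_eq_top (h : IsE23 q e) {x y : α} (hx : DivAtom x) (hy : DivAtom y)
    (hxy : x ≠ y) : comp (x ⊔ y) (x ⊔ y) = ⊤ := by
  refine eq_top_iff.mpr ?_
  calc (⊤ : α) = xᶜ ⊔ yᶜ := by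
        rw [← compl_inf, disjoint_iff.mp (hx.1.disjoint_of_ne hy.1 hxy), compl_bot]
    _ = comp x x ⊔ comp y y := by rw [h.comp_self hx, h.comp_self hy]
    _ ≤ comp (x ⊔ y) (x ⊔ y) :=
      sup_le (comp_mono le_sup_left le_sup_left) (comp_mono le_sup_right le_sup_right)

theorem comp_eq_div_of_disjoint [IsAtomic α] (h : IsE23 q e) {s t : α} (hs : s ≠ ⊥)
    (ht : t ≠ ⊥) (hsd : s ≤ div) (htd : t ≤ div) (hst : Disjoint s t) : comp s t = div := by
  obtain ⟨x, hx, hxs⟩ := (eq_bot_or_exists_atom_le s).resolve_left hs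
  obtain ⟨y, hy, hyt⟩ := (eq_bot_or_exists_atom_le t).resolve_left ht
  have hxy : x ≠ y := fun hxy => hx.1 (disjoint_self.mp (hst.mono hxs (hxy ▸ hyt)))
  refine le_antisymm (comp_le_div_of_disjoint h.1 hst) ?_
  calc (div : α) = comp x y :=
        (h.comp_of_ne ⟨hx, hxs.trans hsd⟩ ⟨hy, hyt.trans htd⟩ hxy).symm
    _ ≤ comp s t := comp_mono hxs hyt

theorem specialExt (h : IsE23 q e) (E : Subalgebra α) : SpecialExt E := by
  constructor
  · intro a b c ha hb hc habc _ x y hx hy hxa hyb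
    by_cases hxy : x = y
    · subst hxy
      have hab : a = b := ha.1.eq_of_le_of_le hb.1 hx.1 hxa hyb
      have hca : c ≠ a := fun hca => habc ⟨hab, hab ▸ hca.symm⟩
      rw [h.comp_self ⟨hx, hxa.trans ha.2⟩]
      exact le_compl_iff_disjoint_right.mpr ((hc.1.disjoint_of_ne ha.1 hca).mono_right hxa)
    · rw [h.comp_of_ne ⟨hx, hxa.trans ha.2⟩ ⟨hy, hyb.trans hb.2⟩ hxy]
      exact hc.2
  · intro a ha haa x y hx hy hxa hya
    by_cases hxy : x = y
    · subst hxy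
      intro hbot
      have hax : a ≤ x := by
        rw [h.comp_self ⟨hx, hxa.trans ha.2⟩, inf_comm, ← disjoint_iff] at hbot
        simpa only [compl_compl] using le_compl_iff_disjoint_right.mpr hbot
      rw [le_antisymm hax hxa, h.comp_self ⟨hx, hxa.trans ha.2⟩] at haa
      exact hx.1 (disjoint_self.mp (le_compl_iff_disjoint_right.mp haa))
    · rw [h.comp_of_ne ⟨hx, hxa.trans ha.2⟩ ⟨hy, hya.trans ha.2⟩ hxy,
        inf_eq_right.mpr ha.2]
      exact ha.1.2.1

theorem flexTrioOf [IsAtomic α] (h : IsE23 q e) {E : Subalgebra α} {a b c : α}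
    (ha : E.DivAtomOf a) (hb : E.DivAtomOf b) (hc : E.DivAtomOf c)
    (hab : a ≠ b) (hac : a ≠ c) (hbc : b ≠ c)
    (haa : comp a a = ⊤) (hbb : comp b b = ⊤) (hcc : comp c c = ⊤) : FlexTrioOf E a b c := by
  have hdiv : ∀ {s t : α}, E.DivAtomOf s → E.DivAtomOf t → s ≠ t → comp s t = div :=
    fun hs ht hst => h.comp_eq_div_of_disjoint hs.1.2.1 ht.1.2.1 hs.2 ht.2
      (hs.1.disjoint_of_ne ht.1 hst)
  refine ⟨ha, hb, hc, hab, hac, hbc, haa, hbb, hcc, hdiv ha hb hab, hdiv ha hc hac,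
    hdiv hb hc hbc, fun d hd hdabc => Or.inl ⟨hdiv hd ha ?_, hdiv hd hb ?_⟩⟩ <;>
  · rintro rfl
    simp at hdabc

theorem apply_sup_ne_sup (h : IsE23 q e) {i j k l : Fin q} (hik : i ≠ k) (hil : i ≠ l) :
    e i ⊔ e j ≠ e k ⊔ e l := by
  obtain ⟨-, -, hinj, -, hatom, -⟩ := h
  intro heq
  have hdisj : Disjoint (e i) (e k ⊔ e l) :=
    ((hatom i).disjoint_of_ne (hatom k) (hinj.ne hik)).sup_right
      ((hatom i).disjoint_of_ne (hatom l) (hinj.ne hil))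
  exact (hatom i).1 (disjoint_self.mp (hdisj.mono_right (heq ▸ le_sup_left)))

end IsE23

end

end NA

/-- For 4 ≤ r and A = E^{23}_{r+3}, the subalgebra E with atoms
1', e₁+e₂, e₃+e₄, e₅+e₆, e₇, …, e_{r+2} makes A a special extension of E, and
a₁, a₂, a₃ is a flexible trio of E. -/
theorem stmt18 {α : Type} [RA α] [Fintype α] (r : ℕ) (hr : 4 ≤ r)
    (e : Fin (r + 3) → α) (hE23 : NA.IsE23 (r + 3) e)
    (aa : Fin r → α)
    (h1 : aa ⟨1, by omega⟩ = e ⟨1, by omega⟩ ⊔ e ⟨2, by omega⟩)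
    (h2 : aa ⟨2, by omega⟩ = e ⟨3, by omega⟩ ⊔ e ⟨4, by omega⟩)
    (h3 : aa ⟨3, by omega⟩ = e ⟨5, by omega⟩ ⊔ e ⟨6, by omega⟩)
    (E : NA.Subalgebra α)
    (hatoms : ∀ x : α, E.AtomOf x ↔ ∃ i : Fin r, x = aa i) :
    NA.SpecialExt E ∧
    NA.FlexTrioOf E (aa ⟨1, by omega⟩) (aa ⟨2, by omega⟩) (aa ⟨3, by omega⟩) := by
  have he : Function.Injective e := hE23.2.2.1
  have hdiv (k : Fin (r + 3)) (hk : (k : ℕ) ≠ 0) : NA.DivAtom (e k) := hE23.divAtom_apply hk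
  have hpair {i j : Fin (r + 3)} (hi : (i : ℕ) ≠ 0) (hj : (j : ℕ) ≠ 0) (hij : i ≠ j)
      (k : Fin r) (hk : aa k = e i ⊔ e j) :
      E.DivAtomOf (aa k) ∧ NA.comp (aa k) (aa k) = ⊤ :=
    ⟨⟨(hatoms _).2 ⟨k, rfl⟩, hk ▸ sup_le (hdiv i hi).2 (hdiv j hj).2⟩,
      hk ▸ hE23.comp_sup_self_eq_top (hdiv i hi) (hdiv j hj) (he.ne hij)⟩
  obtain ⟨ha, haa⟩ := hpair (by simp) (by simp) (by simp) _ h1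
  obtain ⟨hb, hbb⟩ := hpair (by simp) (by simp) (by simp) _ h2
  obtain ⟨hc, hcc⟩ := hpair (by simp) (by simp) (by simp) _ h3
  refine ⟨hE23.specialExt E, hE23.flexTrioOf ha hb hc ?_ ?_ ?_ haa hbb hcc⟩ <;>
  · simp only [h1, h2, h3]
    exact hE23.apply_sup_ne_sup (by simp) (by simp)
end
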